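/- arXiv:1511.04923 — 3 statements merged into one kernel-verified Lean document; each statement's English description precedes it below -/
import Mathlib

section
/- Let α, λ > 0, τ ∈ (0,1), and let X be a strictly positive random variable. Define X_τ = (1-τ)·γ(α,λ) + τ·Y(τ,X,λ), where γ(α,λ) is an independent gamma random variable with shape α and rate λ, and Y(τ,X,λ) is obtained by first drawing x from the law of X, then drawing a Poisson random variable K with parameter xλτ/(1-τ), and finally (if K = k ≥ 1) drawing an independent gamma random variable with shape k and rate λτ/(1-τ) (and Y = 0 if K = 0). Then the Laplace transform of X_τ satisfies, for all μ > 0: E[exp(-μ X_τ)] = (1 + (μ/λ)(1-τ))^(-α) · E[exp(-μτX / (1 + (μ/λ)(1-τ)))]. -/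
/-!
All Laplace transforms are taken in `ℝ≥0∞`, so no integrability has to be checked. The transform
of a convolution is the product of the transforms, and `Gamma(a, r)` has transform
`(r / (r + s)) ^ a`; this gives the first factor. Given `K = k`, the Poisson–gamma variable
therefore has transform `c ^ k` with `c = β / (β + s)`, and the Poisson generating function
`E[c ^ K] = exp (-ρ (1 - c))` turns this into `exp (-ρ s / (β + s))`; with `ρ = X β` and
`s = μ τ`, averaging over `X` gives the second factor.
-/

open MeasureTheory ProbabilityTheory Real Set Filter Topology

noncomputable section

/-- Law of the Poisson–gamma mixture `Y(τ, X, λ)`: given `X = x`, draw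
`K ~ Poisson(xλτ/(1-τ))`, then `Y ~ Gamma(K, λτ/(1-τ))` (`Y = 0` if `K = 0`). -/
def mixtureLaw (lam τ : ℝ) (μX : Measure ℝ) : Measure ℝ :=
  μX.bind fun x =>
    (poissonMeasure (Real.toNNReal (x * lam * τ / (1 - τ)))).bind fun k =>
      if k = 0 then Measure.dirac 0 else gammaMeasure k (lam * τ / (1 - τ))

/-- Law of the gamma smart path `X_τ = (1-τ)·γ(α,λ) + τ·Y(τ,X,λ)`, where
`γ(α,λ)` is an independent Gamma(α,λ) random variable. -/
def smartLaw (α lam τ : ℝ) (μX : Measure ℝ) : Measure ℝ :=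
  Measure.conv ((gammaMeasure α lam).map (fun y => (1 - τ) * y))
    ((mixtureLaw lam τ μX).map (fun y => τ * y))

open scoped NNReal ENNReal Nat

lemma lintegral_pow_poissonMeasure (ρ : ℝ≥0) {c : ℝ} (hc : 0 ≤ c) :
    ∫⁻ k, ENNReal.ofReal (c ^ k) ∂poissonMeasure ρ = ENNReal.ofReal (exp (-(ρ * (1 - c)))) := by
  have hsum : HasSum (fun n : ℕ ↦ exp (-ρ) * ρ ^ n / n ! * c ^ n) (exp (-(ρ * (1 - c)))) := by
    convert! (NormedSpace.expSeries_div_hasSum_exp ((ρ : ℝ) * c)).mul_left (exp (-ρ)) using 1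
    · ext n; rw [mul_pow]; ring
    · rw [← exp_eq_exp_ℝ, ← exp_add]; ring_nf
  rw [poissonMeasure, lintegral_sum_measure, ← hsum.tsum_eq,
    ENNReal.ofReal_tsum_of_nonneg (fun n ↦ by positivity) hsum.summable]
  congr 1 with n
  rw [lintegral_smul_measure, lintegral_dirac, smul_eq_mul, ← ENNReal.ofReal_mul (by positivity)]

lemma lintegral_exp_neg_mul_gammaMeasure {a r s : ℝ} (ha : 0 < a) (hr : 0 < r)
    (hrs : 0 < r + s) :
    ∫⁻ u, ENNReal.ofReal (exp (-s * u)) ∂gammaMeasure a r = ENNReal.ofReal ((r / (r + s)) ^ a) := by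
  -- the exponential tilt turns the Gamma(a, r) density into a multiple of the Gamma(a, r + s) one
  have htilt : ∀ u, gammaPDF a r u * ENNReal.ofReal (exp (-s * u))
      = ENNReal.ofReal ((r / (r + s)) ^ a) * gammaPDF a (r + s) u := by
    intro u
    rcases lt_or_ge u 0 with hu | hu
    · simp only [gammaPDF_of_neg hu, zero_mul, mul_zero]
    · rw [gammaPDF_of_nonneg hu, gammaPDF_of_nonneg hu, ← ENNReal.ofReal_mul (by positivity),
        ← ENNReal.ofReal_mul (by positivity), div_rpow hr.le hrs.le]
      congr 1
      rw [show -((r + s) * u) = -(r * u) + -s * u by ring, exp_add]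
      field_simp
  rw [gammaMeasure, lintegral_withDensity_eq_lintegral_mul _ (f := gammaPDF a r)
    (measurable_gammaPDFReal a r).ennreal_ofReal (by fun_prop)]
  simp only [Pi.mul_apply, htilt]
  rw [lintegral_const_mul _ (f := gammaPDF a (r + s))
      (measurable_gammaPDFReal a (r + s)).ennreal_ofReal,
    lintegral_gammaPDF_eq_one ha hrs, mul_one]

lemma measurable_poissonMeasure : Measurable poissonMeasure := by
  refine Measure.measurable_of_measurable_coe _ fun s hs ↦ ?_
  simp_rw [← (poissonMeasure _).tsum_indicator_apply_singleton s hs]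
  refine Measurable.tsum fun n ↦ ?_
  by_cases hn : n ∈ s
  · simp only [indicator_of_mem hn, poissonMeasure_singleton]
    fun_prop
  · simp only [indicator_of_notMem hn, measurable_const]

/-- `Gamma(K, β)` with `K ~ Poisson(ρ)`; the case `K = 0` is split off because
`gammaMeasure 0 β` is the zero measure. -/
def poissonGammaMeasure (ρ : ℝ≥0) (β : ℝ) : Measure ℝ :=
  (poissonMeasure ρ).bind fun k ↦ if k = 0 then Measure.dirac 0 else gammaMeasure k β

@[fun_prop]
lemma Measurable.poissonGammaMeasure {α : Type*} [MeasurableSpace α] {f : α → ℝ≥0}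
    (hf : Measurable f) (β : ℝ) : Measurable fun a ↦ poissonGammaMeasure (f a) β :=
  ((Measure.measurable_bind' Measurable.of_discrete).comp measurable_poissonMeasure).comp hf

lemma isProbabilityMeasure_poissonGammaMeasure (ρ : ℝ≥0) {β : ℝ} (hβ : 0 < β) :
    IsProbabilityMeasure (poissonGammaMeasure ρ β) := by
  refine isProbabilityMeasure_bind Measurable.of_discrete.aemeasurable (ae_of_all _ fun k ↦ ?_)
  split_ifs with hk
  · infer_instance
  · exact isProbabilityMeasure_gammaMeasure (Nat.cast_pos.mpr (Nat.pos_of_ne_zero hk)) hβ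

lemma lintegral_exp_neg_mul_poissonGammaMeasure (ρ : ℝ≥0) {β s : ℝ} (hβ : 0 < β)
    (hβs : 0 < β + s) :
    ∫⁻ u, ENNReal.ofReal (exp (-s * u)) ∂poissonGammaMeasure ρ β
      = ENNReal.ofReal (exp (-(ρ * s / (β + s)))) := by
  have hgamma : ∀ k : ℕ, ∫⁻ u, ENNReal.ofReal (exp (-s * u))
        ∂(if k = 0 then Measure.dirac 0 else gammaMeasure k β)
      = ENNReal.ofReal ((β / (β + s)) ^ k) := by
    intro k
    split_ifs with hk
    · simp [hk]
    · rw [lintegral_exp_neg_mul_gammaMeasure (Nat.cast_pos.mpr (Nat.pos_of_ne_zero hk)) hβ hβs,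
        rpow_natCast]
  rw [poissonGammaMeasure, Measure.lintegral_bind Measurable.of_discrete.aemeasurable (by fun_prop)]
  simp only [hgamma]
  rw [lintegral_pow_poissonMeasure ρ (by positivity)]
  congr 2
  field_simp
  ring

lemma mixtureLaw_eq_bind (lam τ : ℝ) (μX : Measure ℝ) : mixtureLaw lam τ μX
    = μX.bind fun x ↦ poissonGammaMeasure (x * lam * τ / (1 - τ)).toNNReal (lam * τ / (1 - τ)) :=
  rfl

lemma isProbabilityMeasure_mixtureLaw {lam τ : ℝ} (hlam : 0 < lam) (hτ : τ ∈ Ioo (0 : ℝ) 1)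
    (μX : Measure ℝ) [IsProbabilityMeasure μX] :
    IsProbabilityMeasure (mixtureLaw lam τ μX) := by
  have hβ : 0 < lam * τ / (1 - τ) := div_pos (mul_pos hlam hτ.1) (sub_pos.mpr hτ.2)
  rw [mixtureLaw_eq_bind]
  exact isProbabilityMeasure_bind
    (by fun_prop) (ae_of_all _ fun x ↦ isProbabilityMeasure_poissonGammaMeasure _ hβ)

lemma lintegral_exp_neg_mul_mixtureLaw {lam τ μ : ℝ} (hlam : 0 < lam) (hτ : τ ∈ Ioo (0 : ℝ) 1)
    {μX : Measure ℝ} (hX : ∀ᵐ x ∂μX, 0 ≤ x) (hμ : 0 ≤ μ) :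
    ∫⁻ y, ENNReal.ofReal (exp (-(μ * τ) * y)) ∂mixtureLaw lam τ μX
      = ∫⁻ x, ENNReal.ofReal (exp (-(μ * τ * x) / (1 + μ / lam * (1 - τ)))) ∂μX := by
  obtain ⟨hτ0, hτ1⟩ := hτ
  have h1τ : 0 < 1 - τ := sub_pos.mpr hτ1
  have hβ : 0 < lam * τ / (1 - τ) := by positivity
  rw [mixtureLaw_eq_bind, Measure.lintegral_bind (by fun_prop) (by fun_prop)]
  refine lintegral_congr_ae (hX.mono fun x hx ↦ ?_)
  dsimp only
  rw [lintegral_exp_neg_mul_poissonGammaMeasure _ hβ (by positivity),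
    coe_toNNReal _ (by positivity)]
  congr 2
  field_simp

lemma lintegral_exp_neg_mul_conv (ν₁ ν₂ : Measure ℝ) [SFinite ν₂] (s : ℝ) :
    ∫⁻ u, ENNReal.ofReal (exp (-s * u)) ∂(ν₁ ∗ ν₂)
      = (∫⁻ u, ENNReal.ofReal (exp (-s * u)) ∂ν₁) * ∫⁻ u, ENNReal.ofReal (exp (-s * u)) ∂ν₂ := by
  rw [Measure.lintegral_conv (by fun_prop), ← lintegral_lintegral_mul (by fun_prop) (by fun_prop)]
  simp only [mul_add, exp_add, ENNReal.ofReal_mul (exp_pos _).le]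

lemma lintegral_exp_neg_mul_map_const_mul (ν : Measure ℝ) (s c : ℝ) :
    ∫⁻ u, ENNReal.ofReal (exp (-s * u)) ∂ν.map (c * ·)
      = ∫⁻ u, ENNReal.ofReal (exp (-(s * c) * u)) ∂ν := by
  rw [lintegral_map (by fun_prop) (measurable_const_mul c)]
  simp only [neg_mul, mul_assoc]

/-- Laplace transform of the gamma smart path. -/
theorem laplace_smartLaw (α lam τ : ℝ) (hα : 0 < α) (hlam : 0 < lam)
    (hτ : τ ∈ Ioo (0:ℝ) 1) (μX : Measure ℝ) [IsProbabilityMeasure μX]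
    (hXpos : μX (Iic 0) = 0) (μ : ℝ) (hμ : 0 < μ) :
    ∫ u, Real.exp (-μ * u) ∂(smartLaw α lam τ μX)
      = (1 + (μ / lam) * (1 - τ)) ^ (-α) *
        ∫ x, Real.exp (-(μ * τ * x) / (1 + (μ / lam) * (1 - τ))) ∂μX := by
  have hX : ∀ᵐ x ∂μX, 0 ≤ x :=
    measure_mono_null (fun x (hx : ¬0 ≤ x) ↦ (not_le.mp hx).le) hXpos
  have h1τ : 0 < 1 - τ := sub_pos.mpr hτ.2
  have hgamma : ∫⁻ u, ENNReal.ofReal (exp (-μ * u)) ∂(gammaMeasure α lam).map ((1 - τ) * ·)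
      = ENNReal.ofReal ((1 + μ / lam * (1 - τ)) ^ (-α)) := by
    rw [lintegral_exp_neg_mul_map_const_mul,
      lintegral_exp_neg_mul_gammaMeasure hα hlam (by positivity),
      ← inv_div, inv_rpow (by positivity), ← rpow_neg (by positivity)]
    congr 3
    field_simp
  have := isProbabilityMeasure_mixtureLaw hlam hτ μX
  rw [integral_eq_lintegral_of_nonneg_ae (ae_of_all _ fun _ ↦ (exp_pos _).le) (by fun_prop),
    integral_eq_lintegral_of_nonneg_ae (ae_of_all _ fun _ ↦ (exp_pos _).le) (by fun_prop),
    smartLaw, lintegral_exp_neg_mul_conv, hgamma, lintegral_exp_neg_mul_map_const_mul,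
    lintegral_exp_neg_mul_mixtureLaw hlam hτ hX hμ.le, ENNReal.toReal_mul,
    ENNReal.toReal_ofReal (by positivity)]
end
end

section
/- With X_τ defined as the gamma smart path of a strictly positive random variable X (with parameters α, λ > 0), X_τ converges in distribution to γ(α,λ) as τ → 0⁺, and X_τ converges in distribution to X as τ → 1⁻. -/
/-!
Given `γ(α, λ) = g` and `X = x ≥ 0`, the mixture `Y` is a sum of `K ~ Poisson(x b)` independent
exponentials of rate `b = λτ/(1-τ)`, so it has mean `x` and variance `2x/b`. Hence the mean
square distance of `X_τ` to a point `c` is `((1-τ)g + τx - c)² + 2τ(1-τ)x/λ`, which vanishes at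
`τ = 0` for `c = g` and at `τ = 1` for `c = x`. By Chebyshev's inequality the conditional law of
`X_τ` therefore tends to `δ_g` as `τ → 0⁺` and to `δ_x` as `τ → 1⁻`, and dominated convergence
over the law of `(γ(α, λ), X)` integrates this to the claim.
-/

open MeasureTheory ProbabilityTheory Real Set Filter Topology

noncomputable section

open scoped NNReal Nat BoundedContinuousFunction

namespace ProbabilityTheory

lemma ae_nonneg_gammaMeasure (a r : ℝ) : ∀ᵐ y ∂gammaMeasure a r, 0 ≤ y := by
  simp only [ae_iff, not_le]
  exact (withDensity_apply _ measurableSet_Iio).trans (lintegral_gammaPDF_of_nonpos le_rfl)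

lemma gammaPDF_mul_pow {a r : ℝ} (ha : 0 < a) (hr : 0 < r) (n : ℕ) {y : ℝ} (hy : y ≠ 0) :
    gammaPDF a r y * ENNReal.ofReal (y ^ n)
      = ENNReal.ofReal (Gamma (a + n) / (Gamma a * r ^ n)) * gammaPDF (a + n) r y := by
  rcases hy.lt_or_gt with hy | hy
  · simp [gammaPDF_of_neg hy]
  rw [gammaPDF_of_nonneg hy.le, gammaPDF_of_nonneg hy.le, ← ENNReal.ofReal_mul (by positivity),
    ← ENNReal.ofReal_mul (div_nonneg (Gamma_pos_of_pos (by positivity)).le (by positivity)),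
    add_sub_right_comm, rpow_add_natCast hy.ne', rpow_add hr, rpow_natCast]
  congr 1
  have := (Gamma_pos_of_pos ha).ne'
  have := (Gamma_pos_of_pos (show 0 < a + n by positivity)).ne'
  field_simp

lemma lintegral_pow_gammaMeasure {a r : ℝ} (ha : 0 < a) (hr : 0 < r) (n : ℕ) :
    ∫⁻ y, ENNReal.ofReal (y ^ n) ∂gammaMeasure a r
      = ENNReal.ofReal (Gamma (a + n) / (Gamma a * r ^ n)) := by
  rw [gammaMeasure, lintegral_withDensity_eq_lintegral_mul _ (by unfold gammaPDF; fun_prop)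
    (by fun_prop)]
  simp only [Pi.mul_apply]
  rw [lintegral_congr_ae ((Measure.ae_ne volume 0).mono fun y hy ↦
      gammaPDF_mul_pow ha hr n hy), lintegral_const_mul _ (by unfold gammaPDF; fun_prop),
    lintegral_gammaPDF_eq_one (by positivity) hr, mul_one]

lemma integrable_pow_gammaMeasure {a r : ℝ} (ha : 0 < a) (hr : 0 < r) (n : ℕ) :
    Integrable (fun y ↦ y ^ n) (gammaMeasure a r) :=
  ⟨by fun_prop, (hasFiniteIntegral_iff_ofReal ((ae_nonneg_gammaMeasure a r).mono
    fun _ hy ↦ pow_nonneg hy n)).2 (lintegral_pow_gammaMeasure ha hr n ▸ ENNReal.ofReal_lt_top)⟩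

lemma integral_pow_gammaMeasure {a r : ℝ} (ha : 0 < a) (hr : 0 < r) (n : ℕ) :
    ∫ y, y ^ n ∂gammaMeasure a r = Gamma (a + n) / (Gamma a * r ^ n) := by
  rw [integral_eq_lintegral_of_nonneg_ae ((ae_nonneg_gammaMeasure a r).mono
    fun _ hy ↦ pow_nonneg hy n) (by fun_prop), lintegral_pow_gammaMeasure ha hr n,
    ENNReal.toReal_ofReal (div_nonneg (Gamma_pos_of_pos (by positivity)).le (by positivity))]

lemma integral_id_gammaMeasure {a r : ℝ} (ha : 0 < a) (hr : 0 < r) :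
    ∫ y, y ∂gammaMeasure a r = a / r := by
  have := integral_pow_gammaMeasure ha hr 1
  simp only [pow_one, Nat.cast_one, Gamma_add_one ha.ne'] at this
  rw [this]
  have := (Gamma_pos_of_pos ha).ne'
  field_simp

lemma integral_sq_gammaMeasure {a r : ℝ} (ha : 0 < a) (hr : 0 < r) :
    ∫ y, y ^ 2 ∂gammaMeasure a r = a * (a + 1) / r ^ 2 := by
  rw [integral_pow_gammaMeasure ha hr 2, Nat.cast_ofNat, show a + 2 = a + 1 + 1 by ring,
    Gamma_add_one (by positivity), Gamma_add_one ha.ne']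
  have := (Gamma_pos_of_pos ha).ne'
  field_simp
instance (a r : ℝ) : SFinite (gammaMeasure a r) :=
  inferInstanceAs (SFinite (volume.withDensity _))

lemma lintegral_ofReal_sq_add_mul {ν : Measure ℝ} [IsProbabilityMeasure ν]
    (h1 : Integrable (fun y ↦ y) ν) (h2 : Integrable (fun y ↦ y ^ 2) ν) (p q : ℝ) :
    ∫⁻ y, ENNReal.ofReal ((p + q * y) ^ 2) ∂ν
      = ENNReal.ofReal (p ^ 2 + 2 * p * q * ∫ y, y ∂ν + q ^ 2 * ∫ y, y ^ 2 ∂ν) := by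
  have hexp : (fun y ↦ (p + q * y) ^ 2) = fun y ↦ p ^ 2 + ((2 * p * q) * y + q ^ 2 * y ^ 2) := by
    ext y; ring
  have hint : Integrable (fun y ↦ (2 * p * q) * y + q ^ 2 * y ^ 2) ν :=
    (h1.const_mul _).add (h2.const_mul _)
  rw [← ofReal_integral_eq_lintegral_ofReal _ (ae_of_all _ fun y ↦ sq_nonneg _), hexp,
    integral_add (integrable_const _) hint, integral_add (h1.const_mul _) (h2.const_mul _),
    integral_const_mul, integral_const_mul, integral_const, probReal_univ, one_smul, add_assoc]
  rw [hexp]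
  exact (integrable_const _).add hint

lemma lintegral_ofReal_poissonMeasure {r : ℝ≥0} {v : ℕ → ℝ} (hv : ∀ n, 0 ≤ v n) {s : ℝ}
    (hs : HasSum (fun n ↦ exp (-r) * r ^ n / n ! * v n) s) :
    ∫⁻ n, ENNReal.ofReal (v n) ∂poissonMeasure r = ENNReal.ofReal s := by
  have hint : Integrable v (poissonMeasure r) := by
    refine integrable_poissonMeasure_iff.2 ?_
    simpa [Real.norm_eq_abs, abs_of_nonneg (hv _)] using hs.summable
  rw [← ofReal_integral_eq_lintegral_ofReal hint (ae_of_all _ hv), integral_poissonMeasure,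
    ← hs.tsum_eq]
  rfl

lemma hasSum_poisson_mul_descFactorial (r : ℝ≥0) (j : ℕ) :
    HasSum (fun n ↦ exp (-r) * r ^ n / n ! * (n.descFactorial j : ℝ)) ((r : ℝ) ^ j) := by
  rw [← hasSum_nat_add_iff' j, Finset.sum_eq_zero fun n hn ↦ by
    simp [Nat.descFactorial_eq_zero_iff_lt.2 (Finset.mem_range.1 hn)], sub_zero]
  refine (by simpa using (hasSum_one_poissonMeasure r).mul_left ((r : ℝ) ^ j) :
    HasSum (fun n ↦ (r : ℝ) ^ j * (exp (-r) * r ^ n / n !)) _).congr_fun fun n ↦ ?_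
  have h := Nat.factorial_mul_descFactorial (Nat.le_add_left j n)
  rw [Nat.add_sub_cancel] at h
  have : ((n + j).descFactorial j : ℝ) ≠ 0 := by
    exact_mod_cast (Nat.descFactorial_pos.2 (Nat.le_add_left j n)).ne'
  rw [← h, Nat.cast_mul, pow_add]
  field_simp

lemma measurable_poissonMeasure : Measurable poissonMeasure :=
  Measure.measurable_of_measurable_coe _ fun s _ ↦ by
    simp only [poissonMeasure, Measure.sum_apply _ ‹_›, Measure.smul_apply, smul_eq_mul]
    exact Measurable.tsum fun n ↦ by fun_prop

def erlangKernel (b : ℝ) : Kernel ℕ ℝ :=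
  Kernel.ofFunOfCountable fun k ↦ if k = 0 then Measure.dirac 0 else gammaMeasure k b

def poissonKernel (b : ℝ) : Kernel ℝ ℕ where
  toFun x := poissonMeasure (x * b).toNNReal
  measurable' := measurable_poissonMeasure.comp (by fun_prop)

def poissonGammaKernel (b : ℝ) : Kernel ℝ ℝ := erlangKernel b ∘ₖ poissonKernel b

instance (b : ℝ) : IsMarkovKernel (poissonKernel b) :=
  ⟨fun _ ↦ by dsimp [poissonKernel]; infer_instance⟩

lemma isMarkovKernel_erlangKernel {b : ℝ} (hb : 0 < b) : IsMarkovKernel (erlangKernel b) := by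
  refine ⟨fun k ↦ ?_⟩
  simp only [erlangKernel, Kernel.ofFunOfCountable, Kernel.coe_mk]
  split_ifs with hk
  · infer_instance
  · exact isProbabilityMeasure_gammaMeasure (by positivity) hb

lemma isMarkovKernel_poissonGammaKernel {b : ℝ} (hb : 0 < b) :
    IsMarkovKernel (poissonGammaKernel b) :=
  have := isMarkovKernel_erlangKernel hb
  inferInstanceAs (IsMarkovKernel (_ ∘ₖ _))

lemma lintegral_sq_erlangKernel {b : ℝ} (hb : 0 < b) (k : ℕ) (p q : ℝ) :
    ∫⁻ y, ENNReal.ofReal ((p + q * y) ^ 2) ∂erlangKernel b k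
      = ENNReal.ofReal (p ^ 2 + 2 * p * q * (k / b) + q ^ 2 * (k * (k + 1) / b ^ 2)) := by
  simp only [erlangKernel, Kernel.ofFunOfCountable, Kernel.coe_mk]
  split_ifs with hk
  · simp [hk]
  · have ha : (0 : ℝ) < k := by positivity
    have := isProbabilityMeasure_gammaMeasure ha hb
    rw [lintegral_ofReal_sq_add_mul (by simpa using integrable_pow_gammaMeasure ha hb 1)
      (integrable_pow_gammaMeasure ha hb 2), integral_id_gammaMeasure ha hb,
      integral_sq_gammaMeasure ha hb]

lemma lintegral_sq_poissonGammaKernel {b : ℝ} (hb : 0 < b) {x : ℝ} (hx : 0 ≤ x) (p q : ℝ) :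
    ∫⁻ y, ENNReal.ofReal ((p + q * y) ^ 2) ∂poissonGammaKernel b x
      = ENNReal.ofReal ((p + q * x) ^ 2 + 2 * q ^ 2 * x / b) := by
  rw [poissonGammaKernel, Kernel.lintegral_comp _ _ _ (by fun_prop),
    lintegral_congr fun k ↦ lintegral_sq_erlangKernel hb k p q]
  set m := (x * b).toNNReal
  have hm : (m : ℝ) = x * b := Real.coe_toNNReal _ (by positivity)
  refine lintegral_ofReal_poissonMeasure (fun n ↦ ?_) ?_
  · have : p ^ 2 + 2 * p * q * (n / b) + q ^ 2 * (n * (n + 1) / b ^ 2)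
        = (p + q * (n / b)) ^ 2 + q ^ 2 * n / b ^ 2 := by field_simp; ring
    rw [this]
    positivity
  have H := ((hasSum_poisson_mul_descFactorial m 0).mul_left (p ^ 2)).add
    (((hasSum_poisson_mul_descFactorial m 1).mul_left (2 * p * q / b + 2 * q ^ 2 / b ^ 2)).add
      ((hasSum_poisson_mul_descFactorial m 2).mul_left (q ^ 2 / b ^ 2)))
  rw [show (p + q * x) ^ 2 + 2 * q ^ 2 * x / b = p ^ 2 * (m : ℝ) ^ 0
      + ((2 * p * q / b + 2 * q ^ 2 / b ^ 2) * (m : ℝ) ^ 1 + q ^ 2 / b ^ 2 * (m : ℝ) ^ 2) by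
    rw [hm]; field_simp; ring]
  refine H.congr_fun fun n ↦ ?_
  simp only [Nat.descFactorial_zero, Nat.descFactorial_one, Nat.cast_descFactorial_two,
    Nat.cast_one]
  field_simp
  ring

end ProbabilityTheory

lemma BoundedContinuousFunction.exists_dist_le_add_mul_dist_sq {α β : Type*}
    [PseudoMetricSpace α] [SeminormedAddCommGroup β] (f : α →ᵇ β) (c : α) {ε : ℝ} (hε : 0 < ε) :
    ∃ C, 0 ≤ C ∧ ∀ z, dist (f z) (f c) ≤ ε + C * dist z c ^ 2 := by
  obtain ⟨δ, hδ, hfδ⟩ := Metric.continuous_iff.1 f.continuous c ε hε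
  refine ⟨2 * ‖f‖ / δ ^ 2, by positivity, fun z ↦ ?_⟩
  rcases lt_or_ge (dist z c) δ with hz | hz
  · exact (hfδ z hz).le.trans (le_add_of_nonneg_right (by positivity))
  calc dist (f z) (f c) ≤ 2 * ‖f‖ := f.dist_le_two_norm z c
    _ ≤ 2 * ‖f‖ / δ ^ 2 * dist z c ^ 2 := by
      rw [div_mul_eq_mul_div, le_div_iff₀ (by positivity)]
      gcongr
    _ ≤ ε + 2 * ‖f‖ / δ ^ 2 * dist z c ^ 2 := le_add_of_nonneg_left hε.le

theorem tendsto_integral_of_tendsto_lintegral_dist_sq {ι Ω α : Type*} [MeasurableSpace Ω]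
    [PseudoMetricSpace α] [MeasurableSpace α] [OpensMeasurableSpace α] {l : Filter ι}
    {ν : ι → Measure Ω} (hν : ∀ᶠ i in l, IsProbabilityMeasure (ν i)) {h : ι → Ω → α}
    (hh : ∀ i, Measurable (h i)) {c : α}
    (hc : Tendsto (fun i ↦ ∫⁻ ω, ENNReal.ofReal (dist (h i ω) c ^ 2) ∂ν i) l (𝓝 0))
    (f : α →ᵇ ℝ) : Tendsto (fun i ↦ ∫ ω, f (h i ω) ∂ν i) l (𝓝 (f c)) := by
  refine Metric.tendsto_nhds.2 fun ε hε ↦ ?_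
  obtain ⟨C, hC, hfC⟩ := f.exists_dist_le_add_mul_dist_sq c (half_pos hε)
  have hCc : Tendsto (fun i ↦ ENNReal.ofReal C * ∫⁻ ω, ENNReal.ofReal (dist (h i ω) c ^ 2) ∂ν i)
      l (𝓝 0) := by
    simpa using ENNReal.Tendsto.const_mul hc (Or.inr ENNReal.ofReal_ne_top)
  filter_upwards [hν, hCc.eventually_lt_const (ENNReal.ofReal_pos.2 (half_pos hε))]
    with i hi hlt
  have hfh : Integrable (fun ω ↦ f (h i ω)) (ν i) :=
    .of_bound (f.continuous.measurable.comp (hh i)).aestronglyMeasurable ‖f‖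
      (ae_of_all _ fun ω ↦ f.norm_coe_le_norm _)
  rw [← edist_lt_ofReal]
  calc edist (∫ ω, f (h i ω) ∂ν i) (f c) = ‖∫ ω, (f (h i ω) - f c) ∂ν i‖ₑ := by
        rw [edist_eq_enorm_sub, integral_sub hfh (integrable_const _), integral_const,
          probReal_univ, one_smul]
    _ ≤ ∫⁻ ω, ‖f (h i ω) - f c‖ₑ ∂ν i := enorm_integral_le_lintegral_enorm _
    _ ≤ ∫⁻ ω, (ENNReal.ofReal (ε / 2) + ENNReal.ofReal C * ENNReal.ofReal (dist (h i ω) c ^ 2))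
          ∂ν i := lintegral_mono fun ω ↦ by
        rw [← ENNReal.ofReal_mul hC, ← ENNReal.ofReal_add (half_pos hε).le (by positivity),
          ← edist_eq_enorm_sub, edist_dist]
        exact ENNReal.ofReal_le_ofReal (hfC _)
    _ = ENNReal.ofReal (ε / 2)
          + ENNReal.ofReal C * ∫⁻ ω, ENNReal.ofReal (dist (h i ω) c ^ 2) ∂ν i := by
        rw [lintegral_add_left measurable_const, lintegral_const, measure_univ, mul_one,
          lintegral_const_mul' _ _ ENNReal.ofReal_ne_top]
    _ < ENNReal.ofReal (ε / 2) + ENNReal.ofReal (ε / 2) :=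
        ENNReal.add_lt_add_left ENNReal.ofReal_ne_top hlt
    _ = ENNReal.ofReal ε := by
        rw [← ENNReal.ofReal_add (half_pos hε).le (half_pos hε).le, add_halves]

lemma mixtureLaw_eq_comp (lam τ : ℝ) (μX : Measure ℝ) :
    mixtureLaw lam τ μX = poissonGammaKernel (lam * τ / (1 - τ)) ∘ₘ μX := by
  simp only [mixtureLaw, mul_assoc, mul_div_assoc]
  rfl

lemma smartPath_rate_pos {lam τ : ℝ} (hlam : 0 < lam) (hτ : τ ∈ Ioo 0 1) :
    0 < lam * τ / (1 - τ) :=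
  div_pos (mul_pos hlam hτ.1) (sub_pos.2 hτ.2)

/-- The conditional expectation of `f (X_τ)` given `γ(α, λ) = g` and `X = x`, at `p = (g, x)`. -/
def smartPathCondExp (lam τ : ℝ) (f : ℝ → ℝ) (p : ℝ × ℝ) : ℝ :=
  ∫ y, f ((1 - τ) * p.1 + τ * y) ∂poissonGammaKernel (lam * τ / (1 - τ)) p.2

lemma stronglyMeasurable_smartPathCondExp {lam τ : ℝ} (hlam : 0 < lam) (hτ : τ ∈ Ioo 0 1)
    (f : ℝ →ᵇ ℝ) : StronglyMeasurable (smartPathCondExp lam τ f) := by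
  have := isMarkovKernel_poissonGammaKernel (smartPath_rate_pos hlam hτ)
  exact StronglyMeasurable.integral_kernel_prod_right'
    (κ := Kernel.prodMkLeft ℝ (poissonGammaKernel (lam * τ / (1 - τ))))
    (f := fun q : (ℝ × ℝ) × ℝ ↦ f ((1 - τ) * q.1.1 + τ * q.2))
    (by fun_prop : Continuous _).stronglyMeasurable

lemma norm_smartPathCondExp_le {lam τ : ℝ} (hlam : 0 < lam) (hτ : τ ∈ Ioo 0 1)
    (f : ℝ →ᵇ ℝ) (p : ℝ × ℝ) : ‖smartPathCondExp lam τ f p‖ ≤ ‖f‖ := by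
  have := isMarkovKernel_poissonGammaKernel (smartPath_rate_pos hlam hτ)
  simpa [smartPathCondExp] using norm_integral_le_of_norm_le_const
    (μ := poissonGammaKernel (lam * τ / (1 - τ)) p.2) (ae_of_all _ fun y ↦ f.norm_coe_le_norm _)

lemma smartLaw_eq_map (α lam τ : ℝ) (μX : Measure ℝ) [SFinite (mixtureLaw lam τ μX)] :
    smartLaw α lam τ μX = ((gammaMeasure α lam).prod (mixtureLaw lam τ μX)).map
      fun p ↦ (1 - τ) * p.1 + τ * p.2 := by
  rw [smartLaw, Measure.conv, Measure.map_prod_map _ _ (by fun_prop) (by fun_prop),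
    Measure.map_map (by fun_prop) (by fun_prop)]
  rfl

lemma integral_smartLaw {α lam τ : ℝ} (hα : 0 < α) (hlam : 0 < lam) (hτ : τ ∈ Ioo 0 1)
    (μX : Measure ℝ) [IsProbabilityMeasure μX] (f : ℝ →ᵇ ℝ) :
    ∫ z, f z ∂smartLaw α lam τ μX
      = ∫ p, smartPathCondExp lam τ f p ∂(gammaMeasure α lam).prod μX := by
  have := isProbabilityMeasure_gammaMeasure hα hlam
  have := isMarkovKernel_poissonGammaKernel (smartPath_rate_pos hlam hτ)
  have : IsProbabilityMeasure (mixtureLaw lam τ μX) := by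
    rw [mixtureLaw_eq_comp]; infer_instance
  rw [smartLaw_eq_map, integral_map (by fun_prop) f.continuous.aestronglyMeasurable,
    integral_prod _ (by exact (f.compContinuous ⟨fun p : ℝ × ℝ ↦ (1 - τ) * p.1 + τ * p.2,
      by fun_prop⟩).integrable _),
    integral_prod _ (.of_bound (stronglyMeasurable_smartPathCondExp hlam hτ f).aestronglyMeasurable
      ‖f‖ (ae_of_all _ (norm_smartPathCondExp_le hlam hτ f)))]
  refine integral_congr_ae (ae_of_all _ fun g ↦ ?_)
  dsimp only
  rw [mixtureLaw_eq_comp, Measure.comp_eq_comp_const_apply, Kernel.integral_comp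
    (by exact (f.compContinuous ⟨fun y ↦ (1 - τ) * g + τ * y, by fun_prop⟩).integrable _)]
  rfl

/-- `hτ₀` says `τ₀ ∈ {0, 1}`: only there does the conditional variance `2τ(1-τ)x/λ` of `X_τ`
vanish. -/
lemma tendsto_smartPathCondExp {lam : ℝ} (hlam : 0 < lam) (f : ℝ →ᵇ ℝ) (g : ℝ) {x : ℝ}
    (hx : 0 ≤ x) {l : Filter ℝ} {τ₀ : ℝ} (hl : l ≤ 𝓝 τ₀) (hlI : ∀ᶠ τ in l, τ ∈ Ioo 0 1)
    (hτ₀ : τ₀ * (1 - τ₀) = 0) :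
    Tendsto (fun τ ↦ smartPathCondExp lam τ f (g, x)) l (𝓝 (f ((1 - τ₀) * g + τ₀ * x))) := by
  set c := (1 - τ₀) * g + τ₀ * x
  have hmean : ∀ᶠ τ in l, ∫⁻ y, ENNReal.ofReal (dist ((1 - τ) * g + τ * y) c ^ 2)
      ∂poissonGammaKernel (lam * τ / (1 - τ)) x
        = ENNReal.ofReal (((1 - τ) * g + τ * x - c) ^ 2 + 2 * (τ * (1 - τ)) * x / lam) := by
    filter_upwards [hlI] with τ hτ
    simp_rw [Real.dist_eq, sq_abs, show ∀ y, (1 - τ) * g + τ * y - c = ((1 - τ) * g - c) + τ * y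
      from fun y ↦ by ring]
    rw [lintegral_sq_poissonGammaKernel (smartPath_rate_pos hlam hτ) hx]
    congr 1
    field_simp [hτ.1.ne']
  have hvar : Tendsto (fun τ ↦ ((1 - τ) * g + τ * x - c) ^ 2 + 2 * (τ * (1 - τ)) * x / lam)
      l (𝓝 0) := by
    have := ((by fun_prop : Continuous fun τ : ℝ ↦
      ((1 - τ) * g + τ * x - c) ^ 2 + 2 * (τ * (1 - τ)) * x / lam).tendsto τ₀).mono_left hl
    simpa [c, hτ₀] using this
  refine tendsto_integral_of_tendsto_lintegral_dist_sq (hlI.mono fun τ hτ ↦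
    (isMarkovKernel_poissonGammaKernel (smartPath_rate_pos hlam hτ)).isProbabilityMeasure x)
    (fun τ ↦ by fun_prop) ?_ f
  simpa using ((ENNReal.continuous_ofReal.tendsto 0).comp hvar).congr' (hmean.mono fun _ h ↦ h.symm)

theorem tendsto_integral_smartLaw {α lam : ℝ} (hα : 0 < α) (hlam : 0 < lam)
    (μX : Measure ℝ) [IsProbabilityMeasure μX] (hX : ∀ᵐ x ∂μX, 0 ≤ x) (f : ℝ →ᵇ ℝ)
    {l : Filter ℝ} [l.IsCountablyGenerated] {τ₀ : ℝ} (hl : l ≤ 𝓝 τ₀)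
    (hlI : ∀ᶠ τ in l, τ ∈ Ioo 0 1) (hτ₀ : τ₀ * (1 - τ₀) = 0) :
    Tendsto (fun τ ↦ ∫ z, f z ∂smartLaw α lam τ μX) l
      (𝓝 (∫ p, f ((1 - τ₀) * p.1 + τ₀ * p.2) ∂(gammaMeasure α lam).prod μX)) := by
  have := isProbabilityMeasure_gammaMeasure hα hlam
  refine Tendsto.congr' (hlI.mono fun τ hτ ↦ (integral_smartLaw hα hlam hτ μX f).symm) ?_
  refine tendsto_integral_filter_of_dominated_convergence (fun _ ↦ ‖f‖)
    (hlI.mono fun τ hτ ↦ (stronglyMeasurable_smartPathCondExp hlam hτ f).aestronglyMeasurable)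
    (hlI.mono fun τ hτ ↦ ae_of_all _ (norm_smartPathCondExp_le hlam hτ f)) (integrable_const _) ?_
  filter_upwards [Measure.quasiMeasurePreserving_snd.ae hX] with p hp
  exact tendsto_smartPathCondExp hlam f p.1 hp hl hlI hτ₀

/-- The gamma smart path interpolates in distribution between `γ(α,λ)` (as `τ → 0⁺`)
and `X` (as `τ → 1⁻`): convergence in distribution is stated by testing against
bounded continuous functions. -/
theorem smartLaw_interpolates (α lam : ℝ) (hα : 0 < α) (hlam : 0 < lam)
    (μX : Measure ℝ) [IsProbabilityMeasure μX] (hXpos : μX (Iic 0) = 0) :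
    (∀ f : BoundedContinuousFunction ℝ ℝ,
        Tendsto (fun τ => ∫ x, f x ∂(smartLaw α lam τ μX)) (𝓝[>] 0)
          (𝓝 (∫ x, f x ∂(gammaMeasure α lam)))) ∧
    (∀ f : BoundedContinuousFunction ℝ ℝ,
        Tendsto (fun τ => ∫ x, f x ∂(smartLaw α lam τ μX)) (𝓝[<] 1)
          (𝓝 (∫ x, f x ∂μX))) := by
  have := isProbabilityMeasure_gammaMeasure hα hlam
  have hX : ∀ᵐ x ∂μX, 0 ≤ x := ae_iff.2 (measure_mono_null (fun x hx ↦ (not_le.1 hx).le) hXpos)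
  refine ⟨fun f ↦ ?_, fun f ↦ ?_⟩
  · simpa [integral_fun_fst] using tendsto_integral_smartLaw hα hlam μX hX f
      nhdsWithin_le_nhds (Ioo_mem_nhdsGT one_pos) (by norm_num : (0 : ℝ) * (1 - 0) = 0)
  · simpa [integral_fun_snd] using tendsto_integral_smartLaw hα hlam μX hX f
      nhdsWithin_le_nhds (Ioo_mem_nhdsLT one_pos) (by norm_num : (1 : ℝ) * (1 - 1) = 0)
end
end

section
/- Let α > 0 and τ ∈ (0,1). The density g^{(α,λ)}(τ,u) of the gamma smart path X_τ satisfies g^{(α,λ)}(τ,u) ~ C_{τ,α,λ}·u^{α-1} as u → 0⁺, where C_{τ,α,λ} = (αλ^α/((1-τ)^α Γ(α+1)))·L(P_X)(λτ/(1-τ)) > 0 and L(P_X) is the Laplace transform of the law of X. -/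
open MeasureTheory ProbabilityTheory Real Set Filter Topology

noncomputable section

/-- Modified Bessel function of the first kind `I_ν` (power series definition). -/
def besselI (ν z : ℝ) : ℝ :=
  ∑' n : ℕ, (z / 2) ^ (2 * (n : ℝ) + ν) / ((n.factorial : ℝ) * Real.Gamma (n + ν + 1))

/-- Density of the Gamma(α,λ) distribution on `(0,∞)`. -/
def gammaDens (α lam u : ℝ) : ℝ :=
  lam ^ α / Real.Gamma α * u ^ (α - 1) * Real.exp (-lam * u)

/-- Density `g^{(α,λ)}(τ,·)` of the gamma smart path `X_τ` built from the
law `μX` of a positive random variable `X`. -/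
def smartDens (α lam τ : ℝ) (μX : Measure ℝ) (u : ℝ) : ℝ :=
  lam / (1 - τ) * (u / τ) ^ ((α - 1) / 2) * Real.exp (-lam * u / (1 - τ)) *
    ∫ x, (1 / x) ^ ((α - 1) / 2) * Real.exp (-lam * τ * x / (1 - τ)) *
      besselI (α - 1) (2 * lam * Real.sqrt (u * x * τ) / (1 - τ)) ∂μX

/-- Score function (derivative of the log-density). -/
def score (f : ℝ → ℝ) (u : ℝ) : ℝ := deriv (fun v => Real.log (f v)) u

/-- Localized Fisher information `I^τ_γ` of a density `f`:
`E[W(ρ_W(W) - ρ_{α,λ/(1-τ)}(W))²]`. -/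
def locFisher (α lam τ : ℝ) (f : ℝ → ℝ) : ℝ :=
  ∫ u in Ioi (0:ℝ), u * (score f u - ((α - 1) / u - lam / (1 - τ))) ^ 2 * f u

/-- Standardized Fisher information `J_{st,γ}` of a density `f`:
`E[W(ρ_W(W) - (α-1)/W + λ)²]`. -/
def stdFisher (α lam : ℝ) (f : ℝ → ℝ) : ℝ :=
  ∫ u in Ioi (0:ℝ), u * (score f u - ((α - 1) / u - lam)) ^ 2 * f u

/-- Relative entropy of a density `f` with respect to the Gamma(α,λ) density. -/
def relEntDens (α lam : ℝ) (f : ℝ → ℝ) : ℝ :=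
  ∫ u in Ioi (0:ℝ), f u * Real.log (f u / gammaDens α lam u)

open scoped Nat

/-! Expanding the Bessel series gives `I_{α-1}(z) = (z/2)^{α-1} Φ_α(z²/4)` with the entire
function `Φ_α(t) = ∑ tⁿ / (n! Γ(n+α))` (`reducedBesselI α t`), and the powers of `u` and `x` in
the smart-path density cancel:
`g(τ,u) = (λ/(1-τ))^α u^{α-1} e^{-λu/(1-τ)} ∫ e^{-λτx/(1-τ)} Φ_α(λ²τux/(1-τ)²) dP_X(x)`.
Since `|Φ_α(t)| ≤ C e^{|t|}` and `X > 0`, the integrand is bounded uniformly for small `u`, so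
dominated convergence and `Φ_α(0) = 1/Γ(α)` give the limit `L(P_X)(λτ/(1-τ)) / Γ(α)` of the
integral, while `e^{-λu/(1-τ)} → 1`. -/

def reducedBesselI (α t : ℝ) : ℝ :=
  ∑' n : ℕ, t ^ n / (n ! * Gamma (n + α))

lemma min_Gamma_le_Gamma_nat_add {α : ℝ} (hα : 0 < α) (n : ℕ) :
    min (Gamma α) (Gamma (α + 1)) ≤ Gamma (n + α) := by
  rcases n with _ | m
  · simp
  refine (min_le_right _ _).trans ?_
  induction m with
  | zero => simp [add_comm]
  | succ m ih =>
    have hpos : 0 < ((m + 1 : ℕ) : ℝ) + α := by positivity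
    calc Gamma (α + 1) ≤ Gamma ((m + 1 : ℕ) + α) := ih
      _ ≤ ((m + 1 : ℕ) + α) * Gamma ((m + 1 : ℕ) + α) :=
        le_mul_of_one_le_left (Gamma_pos_of_pos hpos).le (by push_cast; linarith)
      _ = Gamma ((m + 1 + 1 : ℕ) + α) := by
        rw [← Gamma_add_one hpos.ne']; push_cast; ring_nf

lemma min_Gamma_Gamma_add_one_pos {α : ℝ} (hα : 0 < α) :
    0 < min (Gamma α) (Gamma (α + 1)) :=
  lt_min (Gamma_pos_of_pos hα) (Gamma_pos_of_pos (by linarith))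

lemma abs_reducedBesselI_term_le {α : ℝ} (hα : 0 < α) (n : ℕ) (t : ℝ) :
    |t ^ n / (n ! * Gamma (n + α))| ≤
      (min (Gamma α) (Gamma (α + 1)))⁻¹ * (|t| ^ n / n !) := by
  have hmin := min_Gamma_Gamma_add_one_pos hα
  have hΓ := min_Gamma_le_Gamma_nat_add hα n
  rw [abs_div, abs_pow, abs_of_pos (by positivity : (0 : ℝ) < n ! * Gamma (n + α)),
    inv_mul_eq_div, div_div]
  gcongr

lemma abs_reducedBesselI_le {α : ℝ} (hα : 0 < α) (t : ℝ) :
    |reducedBesselI α t| ≤ (min (Gamma α) (Gamma (α + 1)))⁻¹ * exp |t| := by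
  rw [exp_eq_exp_ℝ]
  exact tsum_of_norm_bounded (f := fun n : ℕ ↦ t ^ n / (n ! * Gamma (n + α)))
    ((NormedSpace.expSeries_div_hasSum_exp |t|).mul_left _)
    fun n ↦ abs_reducedBesselI_term_le hα n t

lemma continuous_reducedBesselI {α : ℝ} (hα : 0 < α) : Continuous (reducedBesselI α) := by
  refine continuous_iff_continuousAt.2 fun t ↦ ?_
  have hball : ContinuousOn (reducedBesselI α) (Icc (-(|t| + 1)) (|t| + 1)) := by
    refine continuousOn_tsum (fun n ↦ by fun_prop)
      ((Real.summable_pow_div_factorial (|t| + 1)).mul_left (min (Gamma α) (Gamma (α + 1)))⁻¹)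
      fun n s hs ↦ ?_
    refine (abs_reducedBesselI_term_le hα n s).trans ?_
    gcongr
    exact abs_le.2 hs
  exact hball.continuousAt
    (Icc_mem_nhds (by linarith [neg_abs_le t]) (by linarith [le_abs_self t]))

lemma reducedBesselI_zero (α : ℝ) : reducedBesselI α 0 = (Gamma α)⁻¹ := by
  rw [reducedBesselI, tsum_eq_single 0 fun n hn ↦ by simp [hn]]
  simp

lemma besselI_eq_rpow_mul_reducedBesselI (ν : ℝ) {z : ℝ} (hz : 0 < z) :
    besselI ν z = (z / 2) ^ ν * reducedBesselI (ν + 1) ((z / 2) ^ 2) := by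
  rw [besselI, reducedBesselI, ← tsum_mul_left]
  refine tsum_congr fun n ↦ ?_
  have hpow : (z / 2) ^ (2 * (n : ℝ) + ν) = (z / 2) ^ ν * ((z / 2) ^ 2) ^ n := by
    rw [rpow_add (by positivity), ← pow_mul, ← rpow_natCast]
    push_cast
    ring
  rw [hpow, add_assoc, mul_div_assoc]

lemma besselI_two_mul_sqrt {α a s : ℝ} (ha : 0 < a) (hs : 0 < s) :
    besselI (α - 1) (2 * a * √s) =
      a ^ (α - 1) * s ^ ((α - 1) / 2) * reducedBesselI α (a ^ 2 * s) := by
  rw [besselI_eq_rpow_mul_reducedBesselI _ (by positivity), sub_add_cancel,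
    show 2 * a * √s / 2 = a * √s by ring, mul_pow, sq_sqrt hs.le,
    mul_rpow ha.le (sqrt_nonneg s), sqrt_eq_rpow, ← rpow_mul hs.le]
  ring_nf

lemma smartDens_eq_mul_integral_reducedBesselI {α lam τ u : ℝ} {μX : Measure ℝ}
    (hlam : 0 < lam) (hτ : τ ∈ Ioo (0:ℝ) 1) (hX : ∀ᵐ x ∂μX, 0 < x) (hu : 0 < u) :
    smartDens α lam τ μX u = (lam / (1 - τ)) ^ α * u ^ (α - 1) * exp (-lam * u / (1 - τ)) *
      ∫ x, exp (-(lam * τ / (1 - τ)) * x) *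
        reducedBesselI α ((lam / (1 - τ)) ^ 2 * τ * u * x) ∂μX := by
  obtain ⟨hτ0, hτ1⟩ := hτ
  have ha : 0 < lam / (1 - τ) := div_pos hlam (by linarith)
  have hintegrand : ∀ᵐ x ∂μX, (1 / x) ^ ((α - 1) / 2) * exp (-lam * τ * x / (1 - τ)) *
      besselI (α - 1) (2 * lam * √(u * x * τ) / (1 - τ)) =
      (lam / (1 - τ)) ^ (α - 1) * (u * τ) ^ ((α - 1) / 2) *
        (exp (-(lam * τ / (1 - τ)) * x) *
          reducedBesselI α ((lam / (1 - τ)) ^ 2 * τ * u * x)) := by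
    filter_upwards [hX] with x hx
    have hxβ : x ^ ((α - 1) / 2) ≠ 0 := (rpow_pos_of_pos hx _).ne'
    rw [show 2 * lam * √(u * x * τ) / (1 - τ) = 2 * (lam / (1 - τ)) * √(u * x * τ) by ring,
      besselI_two_mul_sqrt ha (by positivity), show u * x * τ = u * τ * x by ring,
      mul_rpow (by positivity) hx.le, one_div, inv_rpow hx.le]
    field_simp
  have hu_pow : (u / τ) ^ ((α - 1) / 2) * (u * τ) ^ ((α - 1) / 2) = u ^ (α - 1) := by
    rw [← mul_rpow (by positivity) (by positivity), show u / τ * (u * τ) = u ^ (2 : ℝ) by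
      rw [rpow_two]; field_simp, ← rpow_mul hu.le]
    ring_nf
  have ha_pow : lam / (1 - τ) * (lam / (1 - τ)) ^ (α - 1) = (lam / (1 - τ)) ^ α := by
    rw [rpow_sub_one ha.ne']
    field_simp
  rw [smartDens, integral_congr_ae hintegrand, integral_const_mul, ← hu_pow, ← ha_pow]
  ring

lemma integrable_exp_neg_mul {μ : Measure ℝ} [IsFiniteMeasure μ] {c : ℝ} (hc : 0 ≤ c)
    (hμ : ∀ᵐ x ∂μ, 0 ≤ x) : Integrable (fun x ↦ exp (-c * x)) μ := by
  refine (integrable_const 1).mono' (by fun_prop) ?_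
  filter_upwards [hμ] with x hx
  rw [norm_of_nonneg (exp_pos _).le, exp_le_one_iff]
  nlinarith

lemma tendsto_integral_exp_mul_reducedBesselI {α c k : ℝ} (hα : 0 < α) (hc : 0 < c)
    {μ : Measure ℝ} [IsFiniteMeasure μ] (hμ : ∀ᵐ x ∂μ, 0 ≤ x) :
    Tendsto (fun u ↦ ∫ x, exp (-c * x) * reducedBesselI α (k * u * x) ∂μ) (𝓝 0)
      (𝓝 ((∫ x, exp (-c * x) ∂μ) * (Gamma α)⁻¹)) := by
  have hΦ := continuous_reducedBesselI hα
  have hsmall : ∀ᶠ u in 𝓝 (0:ℝ), |k * u| < c := by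
    have : Tendsto (fun u : ℝ ↦ |k * u|) (𝓝 0) (𝓝 0) := by
      simpa using ((continuous_const_mul k).abs).tendsto 0
    exact this.eventually_lt_const hc
  rw [← integral_mul_const]
  refine tendsto_integral_filter_of_dominated_convergence
    (fun _ ↦ (min (Gamma α) (Gamma (α + 1)))⁻¹) (Eventually.of_forall fun _ ↦ by fun_prop)
    ?_ (integrable_const _) ?_
  · filter_upwards [hsmall] with u hu
    filter_upwards [hμ] with x hx
    calc ‖exp (-c * x) * reducedBesselI α (k * u * x)‖
        ≤ exp (-c * x) * ((min (Gamma α) (Gamma (α + 1)))⁻¹ * exp |k * u * x|) := by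
          rw [norm_mul, norm_of_nonneg (exp_pos _).le, norm_eq_abs]
          gcongr
          exact abs_reducedBesselI_le hα _
      _ = (min (Gamma α) (Gamma (α + 1)))⁻¹ * exp (-((c - |k * u|) * x)) := by
          rw [abs_mul _ x, abs_of_nonneg hx, mul_left_comm, ← exp_add]
          ring_nf
      _ ≤ (min (Gamma α) (Gamma (α + 1)))⁻¹ := by
          have hdecay : 0 ≤ (c - |k * u|) * x := mul_nonneg (by linarith) hx
          exact mul_le_of_le_one_right (inv_pos.2 (min_Gamma_Gamma_add_one_pos hα)).le
            (exp_le_one_iff.2 (neg_nonpos.2 hdecay))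
  · refine Eventually.of_forall fun x ↦ ?_
    have hlin : Tendsto (fun u ↦ k * u * x) (𝓝 0) (𝓝 0) := by
      simpa using ((continuous_const_mul k).mul_const x).tendsto 0
    simpa [reducedBesselI_zero] using ((hΦ.tendsto 0).comp hlin).const_mul (exp (-c * x))

/-- Small-`u` asymptotics of the smart-path density:
`g^{(α,λ)}(τ,u) ~ C_{τ,α,λ} u^{α-1}` as `u → 0⁺`, with
`C_{τ,α,λ} = (αλ^α/((1-τ)^α Γ(α+1)))·L(P_X)(λτ/(1-τ)) > 0`. -/
theorem smartDens_asymptotics_zero (α lam τ : ℝ) (hα : 0 < α) (hlam : 0 < lam)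
    (hτ : τ ∈ Ioo (0:ℝ) 1) (μX : Measure ℝ) [IsProbabilityMeasure μX]
    (hXpos : μX (Iic 0) = 0) :
    0 < α * lam ^ α / ((1 - τ) ^ α * Real.Gamma (α + 1)) *
        ∫ x, Real.exp (-(lam * τ / (1 - τ)) * x) ∂μX ∧
      Asymptotics.IsEquivalent (𝓝[>] 0) (fun u => smartDens α lam τ μX u)
        (fun u =>
          (α * lam ^ α / ((1 - τ) ^ α * Real.Gamma (α + 1)) *
              ∫ x, Real.exp (-(lam * τ / (1 - τ)) * x) ∂μX) * u ^ (α - 1)) := by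
  have hX : ∀ᵐ x ∂μX, 0 < x := by
    rw [ae_iff]
    simp only [not_lt]
    exact hXpos
  have h1τ : 0 < 1 - τ := by linarith [hτ.2]
  have hc : 0 < lam * τ / (1 - τ) := div_pos (mul_pos hlam hτ.1) h1τ
  set L := ∫ x, exp (-(lam * τ / (1 - τ)) * x) ∂μX
  have hL : 0 < L := integral_exp_pos (integrable_exp_neg_mul hc.le (hX.mono fun _ ↦ le_of_lt))
  have hC : α * lam ^ α / ((1 - τ) ^ α * Gamma (α + 1)) * L =
      (lam / (1 - τ)) ^ α * (L * (Gamma α)⁻¹) := by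
    rw [Gamma_add_one hα.ne', div_rpow hlam.le h1τ.le]
    field_simp
  have hCpos : 0 < α * lam ^ α / ((1 - τ) ^ α * Gamma (α + 1)) * L := by
    have := Gamma_pos_of_pos hα
    rw [hC]
    positivity
  refine ⟨hCpos, ?_⟩
  have hexp : Tendsto (fun u ↦ exp (-lam * u / (1 - τ))) (𝓝 0) (𝓝 1) := by
    simpa using (by fun_prop : Continuous fun u ↦ exp (-lam * u / (1 - τ))).tendsto 0
  have hlim := (tendsto_const_nhds (x := (lam / (1 - τ)) ^ α)).mul hexp |>.mul
    (tendsto_integral_exp_mul_reducedBesselI (k := (lam / (1 - τ)) ^ 2 * τ) hα hc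
      (hX.mono fun _ ↦ le_of_lt))
  rw [mul_one, ← hC] at hlim
  have hequiv := (Asymptotics.isEquivalent_const_iff_tendsto hCpos.ne').2
    (hlim.mono_left (nhdsWithin_le_nhds (s := Ioi 0)))
  refine (hequiv.mul (Asymptotics.IsEquivalent.refl (u := fun u : ℝ ↦ u ^ (α - 1)))).congr_left ?_
  filter_upwards [self_mem_nhdsWithin] with u hu
  rw [smartDens_eq_mul_integral_reducedBesselI hlam hτ hX hu]
  simp only [Pi.mul_apply]
  ring
end
end
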